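/- Let S be a distributive inverse monoid and let a, b, c ∈ S. Suppose that the join a ∨ b exists and that the meet c ∧ (a ∨ b) exists. Then the meets c ∧ a and c ∧ b both exist, the join (c ∧ a) ∨ (c ∧ b) exists, and c ∧ (a ∨ b) = (c ∧ a) ∨ (c ∧ b). -/

import Mathlib

universe u

/-- An inverse monoid with zero: every element `a` has a unique generalized
inverse `a⁻¹`, and `0` is an absorbing element. -/
class InverseMonoidWithZero (S : Type u) extends Monoid S, Zero S, Inv S where
  zero_mul' : ∀ a : S, 0 * a = 0
  mul_zero' : ∀ a : S, a * 0 = 0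
  mul_inv_mul : ∀ a : S, a * a⁻¹ * a = a
  inv_mul_inv : ∀ a : S, a⁻¹ * a * a⁻¹ = a⁻¹
  inv_unique : ∀ a b : S, a * b * a = a → b * a * b = b → b = a⁻¹

section BasicDefs

variable {S : Type u}

/-- The natural partial order: `a ≤ b` iff `a = e * b` for some idempotent `e`. -/
def nle [InverseMonoidWithZero S] (a b : S) : Prop :=
  ∃ e : S, e * e = e ∧ a = e * b

/-- `a` and `b` are compatible if `a * b⁻¹` and `a⁻¹ * b` are idempotents. -/
def Compat [InverseMonoidWithZero S] (a b : S) : Prop :=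
  (a * b⁻¹) * (a * b⁻¹) = a * b⁻¹ ∧ (a⁻¹ * b) * (a⁻¹ * b) = a⁻¹ * b

/-- `a` and `b` are orthogonal if `a * b⁻¹ = 0` and `a⁻¹ * b = 0`. -/
def Orth [InverseMonoidWithZero S] (a b : S) : Prop :=
  a * b⁻¹ = 0 ∧ a⁻¹ * b = 0

end BasicDefs

/-- A distributive inverse monoid: every compatible pair has a join (for the
natural partial order), recorded by `sup`, and multiplication distributes over
these binary joins. -/
class DistributiveInverseMonoid (S : Type u) extends InverseMonoidWithZero S where
  sup : S → S → S
  le_sup_left : ∀ a b : S, Compat a b → nle a (sup a b)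
  le_sup_right : ∀ a b : S, Compat a b → nle b (sup a b)
  sup_le : ∀ a b c : S, Compat a b → nle a c → nle b c → nle (sup a b) c
  mul_sup : ∀ a b c : S, Compat a b → c * sup a b = sup (c * a) (c * b)
  sup_mul : ∀ a b c : S, Compat a b → sup a b * c = sup (a * c) (b * c)

/-- A Boolean inverse monoid: a distributive inverse monoid whose idempotents
form a Boolean algebra under the natural partial order; `compl` records the
complementation on idempotents. -/
class BooleanInverseMonoid (S : Type u) extends DistributiveInverseMonoid S where
  compl : S → S
  compl_idem : ∀ e : S, e * e = e → compl e * compl e = compl e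
  mul_compl : ∀ e : S, e * e = e → e * compl e = 0
  sup_compl : ∀ e : S, e * e = e → sup e (compl e) = 1

/-- A Boolean inverse ∧-monoid: a Boolean inverse monoid in which every pair of
elements has a meet with respect to the natural partial order. -/
class BooleanInverseMeetMonoid (S : Type u) extends BooleanInverseMonoid S where
  inf : S → S → S
  inf_le_left : ∀ a b : S, nle (inf a b) a
  inf_le_right : ∀ a b : S, nle (inf a b) b
  le_inf : ∀ a b c : S, nle c a → nle c b → nle c (inf a b)

section MoreDefs

variable {S : Type u}

/-- The join of a compatible pair. -/
def bsup [DistributiveInverseMonoid S] (a b : S) : S := DistributiveInverseMonoid.sup a b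

/-- Complementation in the Boolean algebra of idempotents. -/
def bcompl [BooleanInverseMonoid S] (e : S) : S := BooleanInverseMonoid.compl e

/-- The binary meet. -/
def binf [BooleanInverseMeetMonoid S] (a b : S) : S := BooleanInverseMeetMonoid.inf a b

/-- The fixed-point operator `φ(s) = s ∧ 1`. -/
def phi [BooleanInverseMeetMonoid S] (s : S) : S := binf s 1

/-- The support operator `σ(s) = \overline{φ(s)} ⋅ s⁻¹ s`. -/
def sigma [BooleanInverseMeetMonoid S] (s : S) : S := bcompl (phi s) * (s⁻¹ * s)

/-- An infinitesimal is a non-zero element that squares to zero. -/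
def Infinitesimal [InverseMonoidWithZero S] (a : S) : Prop := a ≠ 0 ∧ a * a = 0

/-- A (two-sided) ideal. -/
def IsMIdeal [InverseMonoidWithZero S] (I : Set S) : Prop :=
  I.Nonempty ∧ ∀ a ∈ I, ∀ s : S, s * a ∈ I ∧ a * s ∈ I

/-- A ∨-ideal: an ideal closed under joins of compatible pairs. -/
def IsVIdeal [DistributiveInverseMonoid S] (I : Set S) : Prop :=
  IsMIdeal I ∧ ∀ a ∈ I, ∀ b ∈ I, Compat a b → bsup a b ∈ I

end MoreDefs

/-- 0-simplifying: the only ∨-ideals are `{0}` and `S`. -/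
def ZeroSimplifying (S : Type u) [DistributiveInverseMonoid S] : Prop :=
  ∀ I : Set S, IsVIdeal I → I = {0} ∨ I = Set.univ

/-- 0-simple: non-trivial and the only ideals are `{0}` and `S`. -/
def ZeroSimple (S : Type u) [InverseMonoidWithZero S] : Prop :=
  (∃ s : S, s ≠ 0) ∧ ∀ I : Set S, IsMIdeal I → I = {0} ∨ I = Set.univ

/-- Fundamental: every element commuting with all idempotents is an idempotent. -/
def Fundamental (S : Type u) [InverseMonoidWithZero S] : Prop :=
  ∀ a : S, (∀ e : S, e * e = e → a * e = e * a) → a * a = a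

/-- The Boolean algebra of idempotents is atomless. -/
def IdemAtomless (S : Type u) [InverseMonoidWithZero S] : Prop :=
  ∀ e : S, e * e = e → e ≠ 0 → ∃ f : S, f * f = f ∧ f ≠ 0 ∧ nle f e ∧ f ≠ e

section Filters

variable {S : Type u}

/-- A filter in a Boolean inverse ∧-monoid: a nonempty subset closed under
binary meets and upward closed in the natural partial order. -/
def IsMFilter [BooleanInverseMeetMonoid S] (A : Set S) : Prop :=
  A.Nonempty ∧ (∀ a ∈ A, ∀ b ∈ A, binf a b ∈ A) ∧ ∀ a ∈ A, ∀ b : S, nle a b → b ∈ A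

/-- An ultrafilter: a maximal proper filter. -/
def IsMUltrafilter [BooleanInverseMeetMonoid S] (A : Set S) : Prop :=
  IsMFilter A ∧ (0 : S) ∉ A ∧ ∀ B : Set S, IsMFilter B → (0 : S) ∉ B → A ⊆ B → A = B

/-- A filter of the Boolean algebra of idempotents (meet of idempotents is
their product). -/
def IsIdemFilter [InverseMonoidWithZero S] (F : Set S) : Prop :=
  F.Nonempty ∧ (∀ e ∈ F, e * e = e) ∧ (∀ e ∈ F, ∀ f ∈ F, e * f ∈ F) ∧
    ∀ e ∈ F, ∀ f : S, f * f = f → nle e f → f ∈ F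

/-- An ultrafilter of the Boolean algebra of idempotents. -/
def IsIdemUltrafilter [InverseMonoidWithZero S] (F : Set S) : Prop :=
  IsIdemFilter F ∧ (0 : S) ∉ F ∧
    ∀ G : Set S, IsIdemFilter G → (0 : S) ∉ G → F ⊆ G → F = G

end Filters

section PencilDefs

variable {S : Type u}

/-- `Preceq e f`: there is a pencil from `e` to `f`, i.e. finitely many
elements `x₁, …, xₘ` with `r(xᵢ) ≤ f` for all `i` and `e = ⋁ d(xᵢ)`
(a least upper bound for the natural partial order). -/
def Preceq [DistributiveInverseMonoid S] (e f : S) : Prop :=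
  ∃ l : List S, l ≠ [] ∧ (∀ x ∈ l, nle (x * x⁻¹) f) ∧
    (∀ x ∈ l, nle (x⁻¹ * x) e) ∧ ∀ c : S, (∀ x ∈ l, nle (x⁻¹ * x) c) → nle e c

/-- Piecewise factorizable: every element is a finite join of elements each of
which lies beneath a unit. -/
def PiecewiseFactorizable (S : Type u) [DistributiveInverseMonoid S] : Prop :=
  ∀ s : S, ∃ l : List S, l ≠ [] ∧ (∀ x ∈ l, ∃ g : S, IsUnit g ∧ nle x g) ∧
    (∀ x ∈ l, nle x s) ∧ ∀ c : S, (∀ x ∈ l, nle x c) → nle s c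

/-- A properly infinite idempotent. -/
def ProperlyInfinite [DistributiveInverseMonoid S] (e : S) : Prop :=
  ∃ x y : S, x⁻¹ * x = e ∧ y⁻¹ * y = e ∧ Orth (x * x⁻¹) (y * y⁻¹) ∧
    nle (bsup (x * x⁻¹) (y * y⁻¹)) e

end PencilDefs

/-- Purely infinite: every non-zero idempotent is properly infinite. -/
def PurelyInfinite (S : Type u) [DistributiveInverseMonoid S] : Prop :=
  ∀ e : S, e * e = e → e ≠ 0 → ProperlyInfinite e

/-!
Write the meet as `m = e (a ∨ b)` with `e` idempotent. Since `a ≤ a ∨ b`, the element `e a` is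
below both `c` and `a`, and any `x ≤ c, a` lies below `m = e (a ∨ b)`, hence is fixed by `e`, so
`x = (x x⁻¹) a = (x x⁻¹) (e a) ≤ e a`: thus `c ∧ a = e a`, likewise `c ∧ b = e b`, and these are
compatible with join `e a ∨ e b = e (a ∨ b) = m` by distributivity.
-/

namespace InverseMonoidWithZero

variable {S : Type u} [InverseMonoidWithZero S]

theorem inv_inv (a : S) : a⁻¹⁻¹ = a :=
  (inv_unique a⁻¹ a (inv_mul_inv a) (mul_inv_mul a)).symm

theorem inv_eq_self_of_isIdempotentElem {e : S} (he : IsIdempotentElem e) : e⁻¹ = e :=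
  (inv_unique e e (by rw [he.eq, he.eq]) (by rw [he.eq, he.eq])).symm

theorem isIdempotentElem_mul_inv (a : S) : IsIdempotentElem (a * a⁻¹) := by
  rw [IsIdempotentElem, ← mul_assoc, mul_inv_mul]

theorem isIdempotentElem_inv_mul (a : S) : IsIdempotentElem (a⁻¹ * a) := by
  rw [IsIdempotentElem, ← mul_assoc, inv_mul_inv]

theorem isIdempotentElem_mul {e f : S} (he : IsIdempotentElem e) (hf : IsIdempotentElem f) :
    IsIdempotentElem (e * f) := by
  set x := (e * f)⁻¹
  have hx : x * (e * f) * x = x := inv_mul_inv (e * f)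
  -- `f x e` is another inverse of `e f`, which makes `x` idempotent.
  have hfxe : f * x * e = x := by
    apply inv_unique
    · calc e * f * (f * x * e) * (e * f) = e * (f * f) * x * (e * e) * f := by
            simp only [mul_assoc]
        _ = e * f * x * (e * f) := by rw [hf.eq, he.eq]; simp only [mul_assoc]
        _ = e * f := mul_inv_mul (e * f)
    · calc f * x * e * (e * f) * (f * x * e) = f * (x * (e * e) * (f * f) * x) * e := by
            simp only [mul_assoc]
        _ = f * (x * (e * f) * x) * e := by rw [he.eq, hf.eq]; simp only [mul_assoc]
        _ = f * x * e := by rw [hx]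
  have hxx : IsIdempotentElem x :=
    calc x * x = f * x * e * (f * x * e) := by rw [hfxe]
      _ = f * (x * (e * f) * x) * e := by simp only [mul_assoc]
      _ = x := by rw [hx, hfxe]
  rw [← inv_inv (e * f), inv_eq_self_of_isIdempotentElem hxx]
  exact hxx

theorem mul_comm_of_isIdempotentElem {e f : S} (he : IsIdempotentElem e)
    (hf : IsIdempotentElem f) : e * f = f * e := by
  have hfe : f * e = (e * f)⁻¹ := by
    apply inv_unique
    · calc e * f * (f * e) * (e * f) = e * (f * f) * (e * e) * f := by simp only [mul_assoc]
        _ = e * f * (e * f) := by rw [hf.eq, he.eq]; simp only [mul_assoc]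
        _ = e * f := isIdempotentElem_mul he hf
    · calc f * e * (e * f) * (f * e) = f * (e * e) * (f * f) * e := by simp only [mul_assoc]
        _ = f * e * (f * e) := by rw [he.eq, hf.eq]; simp only [mul_assoc]
        _ = f * e := isIdempotentElem_mul hf he
  rw [hfe, inv_eq_self_of_isIdempotentElem (isIdempotentElem_mul he hf)]

theorem mul_inv_rev (a b : S) : (a * b)⁻¹ = b⁻¹ * a⁻¹ := by
  have hcomm :=
    mul_comm_of_isIdempotentElem (isIdempotentElem_mul_inv b) (isIdempotentElem_inv_mul a)
  symm
  apply inv_unique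
  · calc a * b * (b⁻¹ * a⁻¹) * (a * b) = a * ((b * b⁻¹) * (a⁻¹ * a)) * b := by
          simp only [mul_assoc]
      _ = (a * a⁻¹ * a) * (b * b⁻¹ * b) := by rw [hcomm]; simp only [mul_assoc]
      _ = a * b := by rw [mul_inv_mul, mul_inv_mul]
  · calc b⁻¹ * a⁻¹ * (a * b) * (b⁻¹ * a⁻¹) = b⁻¹ * ((a⁻¹ * a) * (b * b⁻¹)) * a⁻¹ := by
          simp only [mul_assoc]
      _ = (b⁻¹ * b * b⁻¹) * (a⁻¹ * a * a⁻¹) := by rw [← hcomm]; simp only [mul_assoc]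
      _ = b⁻¹ * a⁻¹ := by rw [inv_mul_inv, inv_mul_inv]

theorem isIdempotentElem_conj {e : S} (he : IsIdempotentElem e) (a : S) :
    IsIdempotentElem (a⁻¹ * e * a) :=
  calc a⁻¹ * e * a * (a⁻¹ * e * a) = a⁻¹ * (e * (a * a⁻¹)) * e * a := by simp only [mul_assoc]
    _ = (a⁻¹ * a * a⁻¹) * (e * e) * a := by
        rw [mul_comm_of_isIdempotentElem he (isIdempotentElem_mul_inv a)]; simp only [mul_assoc]
    _ = a⁻¹ * e * a := by rw [inv_mul_inv, he.eq]

end InverseMonoidWithZero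

open InverseMonoidWithZero

section NaturalOrder

variable {S : Type u} [InverseMonoidWithZero S]

theorem nle_trans {x y z : S} (hxy : nle x y) (hyz : nle y z) : nle x z := by
  obtain ⟨e, he, rfl⟩ := hxy
  obtain ⟨f, hf, rfl⟩ := hyz
  exact ⟨e * f, isIdempotentElem_mul he hf, (mul_assoc e f z).symm⟩

theorem idem_mul_nle {e : S} (he : IsIdempotentElem e) (a : S) : nle (e * a) a :=
  ⟨e, he, rfl⟩

theorem idem_mul_nle_idem_mul {e a s : S} (he : IsIdempotentElem e) (has : nle a s) :
    nle (e * a) (e * s) := by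
  obtain ⟨f, hf, rfl⟩ := has
  exact ⟨f, hf, by rw [← mul_assoc, ← mul_assoc, mul_comm_of_isIdempotentElem he hf]⟩

theorem eq_mul_inv_mul_of_nle {x a : S} (hxa : nle x a) : x = x * x⁻¹ * a := by
  obtain ⟨e, he, rfl⟩ := hxa
  rw [InverseMonoidWithZero.mul_inv_rev, inv_eq_self_of_isIdempotentElem he]
  calc e * a = (e * e) * (a * a⁻¹ * a) := by rw [he, mul_inv_mul]
    _ = e * ((a * a⁻¹) * e) * a := by
        rw [mul_comm_of_isIdempotentElem (isIdempotentElem_mul_inv a) he]; simp only [mul_assoc]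
    _ = e * a * (a⁻¹ * e) * a := by simp only [mul_assoc]

theorem exists_eq_mul_idem_of_nle {x a : S} (hxa : nle x a) :
    ∃ f : S, IsIdempotentElem f ∧ x = a * f := by
  obtain ⟨e, he, rfl⟩ := hxa
  refine ⟨a⁻¹ * e * a, isIdempotentElem_conj he a, ?_⟩
  calc e * a = e * (a * a⁻¹ * a) := by rw [mul_inv_mul]
    _ = (a * a⁻¹) * e * a := by
        rw [mul_comm_of_isIdempotentElem (isIdempotentElem_mul_inv a) he]; simp only [mul_assoc]
    _ = a * (a⁻¹ * e * a) := by simp only [mul_assoc]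

theorem idem_mul_eq_of_nle_idem_mul {e x s : S} (he : IsIdempotentElem e) (hx : nle x (e * s)) :
    e * x = x := by
  obtain ⟨f, hf, rfl⟩ := hx
  rw [← mul_assoc, ← mul_assoc, mul_comm_of_isIdempotentElem he hf, mul_assoc f, he.eq, mul_assoc]

theorem nle_idem_mul_of_nle {e x a s : S} (he : IsIdempotentElem e) (hxa : nle x a)
    (hxs : nle x (e * s)) : nle x (e * a) := by
  refine ⟨x * x⁻¹, isIdempotentElem_mul_inv x, ?_⟩
  calc x = e * (x * x⁻¹ * a) := by
        rw [← eq_mul_inv_mul_of_nle hxa, idem_mul_eq_of_nle_idem_mul he hxs]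
    _ = e * (x * x⁻¹) * a := by simp only [mul_assoc]
    _ = x * x⁻¹ * (e * a) := by
        rw [mul_comm_of_isIdempotentElem he (isIdempotentElem_mul_inv x), mul_assoc]

theorem Compat.of_nle {a b x y : S} (hab : Compat a b) (hxa : nle x a) (hyb : nle y b) :
    Compat x y := by
  obtain ⟨e, he, rfl⟩ := hxa
  obtain ⟨f, hf, rfl⟩ := hyb
  obtain ⟨e', he', hae'⟩ := exists_eq_mul_idem_of_nle (idem_mul_nle he a)
  obtain ⟨f', hf', hbf'⟩ := exists_eq_mul_idem_of_nle (idem_mul_nle hf b)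
  constructor
  · have h : e * a * (f * b)⁻¹ = e * (a * b⁻¹) * f := by
      rw [InverseMonoidWithZero.mul_inv_rev, inv_eq_self_of_isIdempotentElem hf]
      simp only [mul_assoc]
    rw [h]
    exact isIdempotentElem_mul (isIdempotentElem_mul he hab.1) hf
  · have h : (e * a)⁻¹ * (f * b) = e' * (a⁻¹ * b) * f' := by
      rw [hae', hbf', InverseMonoidWithZero.mul_inv_rev, inv_eq_self_of_isIdempotentElem he']
      simp only [mul_assoc]
    rw [h]
    exact isIdempotentElem_mul (isIdempotentElem_mul he' hab.2) hf'

def IsNatMeet (c a m : S) : Prop :=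
  nle m c ∧ nle m a ∧ ∀ x : S, nle x c → nle x a → nle x m

theorem IsNatMeet.idem_mul_of_nle {c s a e : S} (he : IsIdempotentElem e)
    (hmeet : IsNatMeet c s (e * s)) (has : nle a s) : IsNatMeet c a (e * a) :=
  ⟨nle_trans (idem_mul_nle_idem_mul he has) hmeet.1, idem_mul_nle he a,
    fun x hxc hxa => nle_idem_mul_of_nle he hxa (hmeet.2.2 x hxc (nle_trans hxa has))⟩

end NaturalOrder

/-- In a distributive inverse monoid, if `a ∨ b` exists (i.e.
`a` and `b` are compatible) and `c ∧ (a ∨ b)` exists, then `c ∧ a` and `c ∧ b`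
exist, `(c ∧ a) ∨ (c ∧ b)` exists, and `c ∧ (a ∨ b) = (c ∧ a) ∨ (c ∧ b)`. -/
theorem statement2 {S : Type u} [DistributiveInverseMonoid S] (a b c : S)
    (hab : Compat a b) (m : S)
    (hm1 : nle m c) (hm2 : nle m (bsup a b))
    (hm3 : ∀ x : S, nle x c → nle x (bsup a b) → nle x m) :
    ∃ ma mb : S,
      (nle ma c ∧ nle ma a ∧ ∀ x : S, nle x c → nle x a → nle x ma) ∧
      (nle mb c ∧ nle mb b ∧ ∀ x : S, nle x c → nle x b → nle x mb) ∧
      Compat ma mb ∧ m = bsup ma mb := by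
  obtain ⟨e, he, rfl⟩ := hm2
  have hmeet : IsNatMeet c (bsup a b) (e * bsup a b) := ⟨hm1, idem_mul_nle he _, hm3⟩
  exact ⟨e * a, e * b, hmeet.idem_mul_of_nle he (DistributiveInverseMonoid.le_sup_left a b hab),
    hmeet.idem_mul_of_nle he (DistributiveInverseMonoid.le_sup_right a b hab),
    hab.of_nle (idem_mul_nle he a) (idem_mul_nle he b), DistributiveInverseMonoid.mul_sup a b e hab⟩
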